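/- Assume the perturbed blended dynamics (with synchronization errors e_i as inputs) is δ-ISS with (β, γ̂), and assume the funnel objective holds so that ‖e_i(t)‖_∞ ≤ d_G Ψ(t) for all i and t ≥ t_0. Then for any decreasing w : [0, ∞) → (0, 1] with lim w = 0 there exists γ ∈ 𝒦_∞ such that, for each agent i, ‖(y_i(t), z_i(t)) − (ŝ(t), ẑ_i(t))‖_∞ ≤ γ(sup_{s∈[t_0,t)} d_G Ψ(s) w(t − s)) + d_G Ψ(t) for all t ≥ t_0, where (ŝ, ẑ_1, ..., ẑ_N) solves the (unperturbed) blended dynamics with ŝ(t_0) = (1/N)∑_i y_i(t_0) and ẑ_i(t_0) = z_i(t_0). In particular, if lim_{t→∞} Ψ(t) = 0, the network behavior asymptotically coincides with the blended dynamics. -/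

import Mathlib

open Filter

def ClassKinf (γ : ℝ → ℝ) : Prop :=
  ContinuousOn γ (Set.Ici 0) ∧ StrictMonoOn γ (Set.Ici 0) ∧ γ 0 = 0 ∧
    Tendsto γ atTop atTop

def ClassKL (β : ℝ → ℝ → ℝ) : Prop :=
  (∀ t ∈ Set.Ici (0 : ℝ), ContinuousOn (fun r => β r t) (Set.Ici 0) ∧
      StrictMonoOn (fun r => β r t) (Set.Ici 0) ∧ β 0 t = 0) ∧
  (∀ r > (0 : ℝ), AntitoneOn (β r) (Set.Ici 0) ∧ Tendsto (β r) atTop (nhds 0)) ∧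
  (∀ r ≥ (0 : ℝ), ∀ t ≥ (0 : ℝ), 0 ≤ β r t)

/-!
Let `D(t)` be the distance between the averaged network state `(s, z)` and the blended solution.
Restarting the δ-ISS estimate at `t - T` gives `D(t) ≤ β(C, T) + γ̂(sup_{[t - T, t)} ‖e‖)`, where
`C = γ̂(d_G sup Ψ)` bounds `D` uniformly (restart at `t₀`, where `D = 0`). On `[t - T, t)` the
weight satisfies `w(t - s) ≥ w(T)`, so the input term is at most `γ̂(S(t) / w(T))` with `S` the
fading-memory supremum. The infimum over `T` of `β(C, T) + γ̂(r / w(T))` is monotone in `r` and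
tends to `0` as `r → 0⁺`; averaging it over `[r, 2r]` and adding `r` gives the class-`𝒦_∞`
majorant `γ`. The agent-wise estimate follows by the triangle inequality with `‖y_i - s‖ ≤ d_G Ψ`.
-/

open Filter Set Topology MeasureTheory intervalIntegral

namespace ClassKinf

variable {γ : ℝ → ℝ}

lemma monotoneOn (hγ : ClassKinf γ) : MonotoneOn γ (Ici 0) :=
  hγ.2.1.monotoneOn

lemma nonneg (hγ : ClassKinf γ) {x : ℝ} (hx : 0 ≤ x) : 0 ≤ γ x :=
  hγ.2.2.1 ▸ hγ.monotoneOn self_mem_Ici hx hx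

lemma exists_pos_lt (hγ : ClassKinf γ) {ε : ℝ} (hε : 0 < ε) : ∃ η > 0, γ η < ε := by
  have hγ0 : Tendsto γ (𝓝[≥] 0) (𝓝 0) := by
    simpa [ContinuousWithinAt, hγ.2.2.1] using hγ.1 0 self_mem_Ici
  have hsmall : ∀ᶠ x in 𝓝[>] (0 : ℝ), γ x < ε :=
    (hγ0.mono_left (nhdsWithin_mono _ Ioi_subset_Ici_self)).eventually (eventually_lt_nhds hε)
  obtain ⟨η, hη, hη0⟩ := (hsmall.and self_mem_nhdsWithin).exists
  exact ⟨η, hη0, hη⟩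

end ClassKinf

namespace ClassKL

variable {β : ℝ → ℝ → ℝ}

lemma nonneg (hβ : ClassKL β) {r T : ℝ} (hr : 0 ≤ r) (hT : 0 ≤ T) : 0 ≤ β r T :=
  hβ.2.2 r hr T hT

lemma zero_left (hβ : ClassKL β) {T : ℝ} (hT : 0 ≤ T) : β 0 T = 0 :=
  (hβ.1 T hT).2.2

lemma monotoneOn_left (hβ : ClassKL β) {T : ℝ} (hT : 0 ≤ T) :
    MonotoneOn (fun r => β r T) (Ici 0) :=
  (hβ.1 T hT).2.1.monotoneOn

lemma exists_lt (hβ : ClassKL β) {r ε : ℝ} (hr : 0 ≤ r) (hε : 0 < ε) :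
    ∃ T ≥ 0, β r T < ε := by
  rcases hr.eq_or_lt with rfl | hr
  · exact ⟨0, le_rfl, by rwa [hβ.zero_left le_rfl]⟩
  · obtain ⟨T, hT, hT0⟩ :=
      (((hβ.2.1 r hr).2.eventually_lt_const hε).and (eventually_ge_atTop 0)).exists
    exact ⟨T, hT0, hT⟩

end ClassKL

section Majorant

variable {G : ℝ → ℝ}

/-- The mean of `G` over `[r, 2r]`, written so that it is also meaningful at `r = 0`. -/
noncomputable def dilationAverage (G : ℝ → ℝ) (r : ℝ) : ℝ :=
  ∫ u in (1 : ℝ)..2, G (r * u)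

lemma dilationAverage_zero (hG0 : Tendsto G (𝓝[≥] 0) (𝓝 0)) : dilationAverage G 0 = 0 := by
  have hG00 : G 0 = 0 :=
    tendsto_nhds_unique (tendsto_pure_nhds G 0) (hG0.mono_left (pure_le_nhdsWithin self_mem_Ici))
  simp [dilationAverage, hG00]

namespace Monotone

lemma intervalIntegrable_comp_mul (hG : Monotone G) {r : ℝ} (hr : 0 ≤ r) (a b : ℝ) :
    IntervalIntegrable (fun u => G (r * u)) volume a b :=
  (hG.comp fun _ _ h => mul_le_mul_of_nonneg_left h hr).intervalIntegrable

lemma le_dilationAverage (hG : Monotone G) {r : ℝ} (hr : 0 ≤ r) : G r ≤ dilationAverage G r := by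
  have h := integral_mono_on (by norm_num) intervalIntegrable_const
    (hG.intervalIntegrable_comp_mul hr 1 2) fun u hu => hG (le_mul_of_one_le_right hr hu.1)
  norm_num at h
  exact h

lemma dilationAverage_le (hG : Monotone G) {r : ℝ} (hr : 0 ≤ r) :
    dilationAverage G r ≤ G (2 * r) := by
  have h := integral_mono_on (by norm_num) (hG.intervalIntegrable_comp_mul hr 1 2)
    intervalIntegrable_const fun u hu => hG (by nlinarith [hu.2] : r * u ≤ 2 * r)
  norm_num at h
  exact h

lemma monotoneOn_dilationAverage (hG : Monotone G) : MonotoneOn (dilationAverage G) (Ici 0) :=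
  fun r hr s hs hrs => integral_mono_on (by norm_num) (hG.intervalIntegrable_comp_mul hr 1 2)
    (hG.intervalIntegrable_comp_mul hs 1 2)
    fun u hu => hG (mul_le_mul_of_nonneg_right hrs (by linarith [hu.1]))

lemma continuousAt_dilationAverage (hG : Monotone G) {r : ℝ} (hr : r ≠ 0) :
    ContinuousAt (dilationAverage G) r := by
  have hint : ∀ a b : ℝ, IntervalIntegrable G volume a b := fun _ _ => hG.intervalIntegrable
  have hprim : Continuous fun x => ∫ u in (0 : ℝ)..x, G u := continuous_primitive hint 0
  have hformula : ∀ x ≠ 0, x⁻¹ * ((∫ u in (0 : ℝ)..x * 2, G u) - ∫ u in (0 : ℝ)..x * 1, G u) =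
      dilationAverage G x := fun x hx => by
    rw [integral_interval_sub_left (hint _ _) (hint _ _), dilationAverage,
      integral_comp_mul_left G hx, smul_eq_mul]
  refine ContinuousAt.congr ?_ (eventually_ne_nhds hr |>.mono hformula)
  exact (continuousAt_inv₀ hr).mul ((hprim.comp (continuous_mul_const 2)).sub
    (hprim.comp (continuous_mul_const 1))).continuousAt

lemma continuousOn_dilationAverage (hG : Monotone G) (hG0 : Tendsto G (𝓝[≥] 0) (𝓝 0)) :
    ContinuousOn (dilationAverage G) (Ici 0) := by
  intro r hr
  rcases (mem_Ici.mp hr).eq_or_lt with rfl | hr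
  · have hG2 : Tendsto (fun r => G (2 * r)) (𝓝[≥] 0) (𝓝 0) :=
      hG0.comp <| tendsto_nhdsWithin_of_tendsto_nhds_of_eventually_within _
        (by simpa using ((continuous_const_mul (2 : ℝ)).tendsto 0).mono_left nhdsWithin_le_nhds)
        (eventually_nhdsWithin_of_forall fun x hx => mem_Ici.mpr (mul_nonneg zero_le_two hx))
    rw [ContinuousWithinAt, dilationAverage_zero hG0]
    exact tendsto_of_tendsto_of_tendsto_of_le_of_le' hG0 hG2
      (eventually_nhdsWithin_of_forall fun x hx => hG.le_dilationAverage hx)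
      (eventually_nhdsWithin_of_forall fun x hx => hG.dilationAverage_le hx)
  · exact (hG.continuousAt_dilationAverage hr.ne').continuousWithinAt

end Monotone

/-- The witness is `r + dilationAverage G r`: averaging removes the jumps of `G`, and the
summand `r` makes it strictly increasing and unbounded. -/
theorem exists_classKinf_ge_of_monotone (hG : Monotone G) (hG0 : Tendsto G (𝓝[≥] 0) (𝓝 0)) :
    ∃ γ, ClassKinf γ ∧ ∀ r ≥ 0, G r ≤ γ r := by
  have hA := hG.monotoneOn_dilationAverage
  have hA0 := dilationAverage_zero hG0
  have hAnn : ∀ r ≥ 0, 0 ≤ dilationAverage G r := fun r hr => hA0 ▸ hA self_mem_Ici hr hr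
  refine ⟨fun r => r + dilationAverage G r, ⟨?_, ?_, by simp [hA0], ?_⟩, ?_⟩
  · exact continuousOn_id.add (hG.continuousOn_dilationAverage hG0)
  · exact fun r hr s hs hrs => add_lt_add_of_lt_of_le hrs (hA hr hs hrs.le)
  · exact tendsto_atTop_mono' _ (eventually_ge_atTop 0 |>.mono fun r hr => by
      simpa using hAnn r hr) tendsto_id
  · exact fun r hr => (hG.le_dilationAverage hr).trans (le_add_of_nonneg_left hr)

end Majorant

section Envelope

variable {β : ℝ → ℝ → ℝ} {γ w : ℝ → ℝ} {C : ℝ}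

/-- `max r 0` keeps this monotone on all of `ℝ`, `γ` being uncontrolled on negative arguments. -/
noncomputable def klEnvelope (β : ℝ → ℝ → ℝ) (γ w : ℝ → ℝ) (C r : ℝ) : ℝ :=
  ⨅ T : Ici (0 : ℝ), β C T + γ (max r 0 / w T)

lemma klEnvelope_term_nonneg (hβ : ClassKL β) (hγ : ClassKinf γ) (hw : ∀ T ≥ 0, 0 < w T)
    (hC : 0 ≤ C) (r : ℝ) (T : Ici (0 : ℝ)) : 0 ≤ β C T + γ (max r 0 / w T) :=
  add_nonneg (hβ.nonneg hC T.2) (hγ.nonneg (div_nonneg (le_max_right _ _) (hw T T.2).le))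

lemma bddBelow_klEnvelope_range (hβ : ClassKL β) (hγ : ClassKinf γ) (hw : ∀ T ≥ 0, 0 < w T)
    (hC : 0 ≤ C) (r : ℝ) :
    BddBelow (range fun T : Ici (0 : ℝ) => β C T + γ (max r 0 / w T)) :=
  ⟨0, forall_mem_range.2 (klEnvelope_term_nonneg hβ hγ hw hC r)⟩

lemma klEnvelope_nonneg (hβ : ClassKL β) (hγ : ClassKinf γ) (hw : ∀ T ≥ 0, 0 < w T)
    (hC : 0 ≤ C) (r : ℝ) : 0 ≤ klEnvelope β γ w C r :=
  le_ciInf (klEnvelope_term_nonneg hβ hγ hw hC r)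

lemma monotone_klEnvelope (hβ : ClassKL β) (hγ : ClassKinf γ) (hw : ∀ T ≥ 0, 0 < w T)
    (hC : 0 ≤ C) : Monotone (klEnvelope β γ w C) := fun r _ hrr' =>
  ciInf_mono (bddBelow_klEnvelope_range hβ hγ hw hC r) fun T =>
    add_le_add_right (hγ.monotoneOn (div_nonneg (le_max_right _ _) (hw T T.2).le)
      (div_nonneg (le_max_right _ _) (hw T T.2).le)
      (div_le_div_of_nonneg_right (max_le_max hrr' le_rfl) (hw T T.2).le)) _

lemma le_klEnvelope {r x : ℝ} (hr : 0 ≤ r) (h : ∀ T ≥ 0, x ≤ β C T + γ (r / w T)) :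
    x ≤ klEnvelope β γ w C r :=
  le_ciInf fun T => by simpa only [max_eq_left hr] using h T T.2

lemma tendsto_klEnvelope (hβ : ClassKL β) (hγ : ClassKinf γ) (hw : ∀ T ≥ 0, 0 < w T)
    (hC : 0 ≤ C) : Tendsto (klEnvelope β γ w C) (𝓝[≥] 0) (𝓝 0) := by
  refine tendsto_order.2 ⟨fun a ha => Eventually.of_forall fun r =>
    ha.trans_le (klEnvelope_nonneg hβ hγ hw hC r), fun ε hε => ?_⟩
  obtain ⟨T, hT, hβT⟩ := hβ.exists_lt hC (half_pos hε)
  obtain ⟨η, hη, hγη⟩ := hγ.exists_pos_lt (half_pos hε)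
  have hδ : 0 < η * w T := mul_pos hη (hw T hT)
  filter_upwards [nhdsWithin_le_nhds (eventually_lt_nhds hδ)] with r hr
  calc klEnvelope β γ w C r ≤ klEnvelope β γ w C (η * w T) :=
        monotone_klEnvelope hβ hγ hw hC hr.le
    _ ≤ β C T + γ (max (η * w T) 0 / w T) :=
        ciInf_le (bddBelow_klEnvelope_range hβ hγ hw hC _) ⟨T, hT⟩
    _ = β C T + γ η := by rw [max_eq_left hδ.le, mul_div_cancel_right₀ _ (hw T hT).ne']
    _ < ε := by linarith

theorem exists_classKinf_ge_of_forall_le_KL_add (hβ : ClassKL β) (hγ : ClassKinf γ)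
    (hw : ∀ T ≥ 0, 0 < w T) (hC : 0 ≤ C) :
    ∃ γ', ClassKinf γ' ∧ ∀ r ≥ 0, ∀ x, (∀ T ≥ 0, x ≤ β C T + γ (r / w T)) → x ≤ γ' r := by
  obtain ⟨γ', hγ', hle⟩ := exists_classKinf_ge_of_monotone (monotone_klEnvelope hβ hγ hw hC)
    (tendsto_klEnvelope hβ hγ hw hC)
  exact ⟨γ', hγ', fun r hr x hx => (le_klEnvelope hr hx).trans (hle r hr)⟩

end Envelope

section FadingMemory

variable {ι E : Type*} [SeminormedAddCommGroup E] {e : ι → ℝ → E}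

noncomputable def supNormIco (e : ι → ℝ → E) (τ t : ℝ) : ℝ :=
  sSup {r | ∃ s ∈ Ico τ t, ∃ i, r = ‖e i s‖}

noncomputable def fadingSup (b w : ℝ → ℝ) (t₀ t : ℝ) : ℝ :=
  sSup {r | ∃ s ∈ Ico t₀ t, r = b s * w (t - s)}

lemma supNormIco_nonneg (e : ι → ℝ → E) (τ t : ℝ) : 0 ≤ supNormIco e τ t :=
  Real.sSup_nonneg fun _ ⟨_, _, _, h⟩ => h ▸ norm_nonneg _

lemma supNormIco_le {τ t c : ℝ} (hc : 0 ≤ c) (h : ∀ s ∈ Ico τ t, ∀ i, ‖e i s‖ ≤ c) :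
    supNormIco e τ t ≤ c :=
  Real.sSup_le (fun _ ⟨s, hs, i, h'⟩ => h' ▸ h s hs i) hc

variable {b w : ℝ → ℝ} {B t₀ : ℝ}

lemma fadingSup_nonneg (hb : ∀ s, 0 ≤ b s) (hw : ∀ T ≥ 0, 0 < w T) (t₀ t : ℝ) :
    0 ≤ fadingSup b w t₀ t :=
  Real.sSup_nonneg fun _ ⟨s, hs, h⟩ => h ▸ mul_nonneg (hb s) (hw _ (sub_nonneg.2 hs.2.le)).le

lemma le_fadingSup (hb : ∀ s, 0 ≤ b s) (hbB : ∀ s, b s ≤ B) (hw1 : ∀ T ≥ 0, w T ≤ 1)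
    {s t : ℝ} (hs : s ∈ Ico t₀ t) : b s * w (t - s) ≤ fadingSup b w t₀ t :=
  le_csSup ⟨B, fun _ ⟨u, hu, h⟩ => h ▸
      (mul_le_of_le_one_right (hb u) (hw1 _ (sub_nonneg.2 hu.2.le))).trans (hbB u)⟩
    ⟨s, hs, rfl⟩

/-- On `[t - T, t)` the weight `w(t - s)` is at least `w(T)`. -/
lemma supNormIco_le_fadingSup_div (hb : ∀ s, 0 ≤ b s) (hbB : ∀ s, b s ≤ B)
    (hw : ∀ T ≥ 0, 0 < w T) (hw1 : ∀ T ≥ 0, w T ≤ 1) (hwanti : AntitoneOn w (Ici 0))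
    (he : ∀ i, ∀ s ≥ t₀, ‖e i s‖ ≤ b s) {τ t T : ℝ} (hτ : t₀ ≤ τ) (hT : 0 ≤ T)
    (hτT : t - T ≤ τ) : supNormIco e τ t ≤ fadingSup b w t₀ t / w T := by
  have hwT := hw T hT
  refine supNormIco_le (div_nonneg (fadingSup_nonneg hb hw t₀ t) hwT.le) fun s hs i => ?_
  have hs₀ : s ∈ Ico t₀ t := ⟨hτ.trans hs.1, hs.2⟩
  rw [le_div_iff₀ hwT]
  calc ‖e i s‖ * w T ≤ b s * w (t - s) :=
        mul_le_mul (he i s hs₀.1) (hwanti (sub_nonneg.2 hs.2.le) hT (by linarith [hs.1]))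
          hwT.le (hb s)
    _ ≤ fadingSup b w t₀ t := le_fadingSup hb hbB hw1 hs₀

variable {β : ℝ → ℝ → ℝ} {γ : ℝ → ℝ} {D : ℝ → ℝ}

lemma le_of_restart_at_start (hβ : ClassKL β) (hD0 : D t₀ = 0)
    (hrestart : ∀ τ ≥ t₀, ∀ t ≥ τ, D t ≤ β (D τ) (t - τ) + γ (supNormIco e τ t))
    {t : ℝ} (ht : t₀ ≤ t) : D t ≤ γ (supNormIco e t₀ t) := by
  simpa [hD0, hβ.zero_left (sub_nonneg.2 ht)] using hrestart t₀ le_rfl t ht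

lemma le_of_restart_of_norm_le (hβ : ClassKL β) (hγ : ClassKinf γ) (hB : 0 ≤ B)
    (he : ∀ i, ∀ s ≥ t₀, ‖e i s‖ ≤ B) (hD0 : D t₀ = 0)
    (hrestart : ∀ τ ≥ t₀, ∀ t ≥ τ, D t ≤ β (D τ) (t - τ) + γ (supNormIco e τ t))
    {t : ℝ} (ht : t₀ ≤ t) : D t ≤ γ B :=
  (le_of_restart_at_start hβ hD0 hrestart ht).trans <| hγ.monotoneOn (supNormIco_nonneg e t₀ t)
    hB (supNormIco_le hB fun s hs i => he i s hs.1)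

/-- Restart at `max t₀ (t - T)`: the transient is then `β(·, T)` and only the window
`[t - T, t)` of the input is remembered. -/
theorem le_KL_add_fadingSup_div_of_restart (hβ : ClassKL β) (hγ : ClassKinf γ)
    (hb : ∀ s, 0 ≤ b s) (hbB : ∀ s, b s ≤ B) (hw : ∀ T ≥ 0, 0 < w T) (hw1 : ∀ T ≥ 0, w T ≤ 1)
    (hwanti : AntitoneOn w (Ici 0)) (he : ∀ i, ∀ s ≥ t₀, ‖e i s‖ ≤ b s) (hD : ∀ t, 0 ≤ D t)
    (hD0 : D t₀ = 0)
    (hrestart : ∀ τ ≥ t₀, ∀ t ≥ τ, D t ≤ β (D τ) (t - τ) + γ (supNormIco e τ t))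
    {T t : ℝ} (hT : 0 ≤ T) (ht : t₀ ≤ t) :
    D t ≤ β (γ B) T + γ (fadingSup b w t₀ t / w T) := by
  have hB : 0 ≤ B := (hb t₀).trans (hbB t₀)
  have hsup : ∀ τ, t₀ ≤ τ → t - T ≤ τ →
      γ (supNormIco e τ t) ≤ γ (fadingSup b w t₀ t / w T) := fun τ hτ hτT =>
    hγ.monotoneOn (supNormIco_nonneg e τ t)
      (div_nonneg (fadingSup_nonneg hb hw t₀ t) (hw T hT).le)
      (supNormIco_le_fadingSup_div hb hbB hw hw1 hwanti he hτ hT hτT)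
  rcases le_total (t - T) t₀ with hearly | hlate
  · calc D t ≤ γ (supNormIco e t₀ t) := le_of_restart_at_start hβ hD0 hrestart ht
      _ ≤ γ (fadingSup b w t₀ t / w T) := hsup t₀ le_rfl hearly
      _ ≤ β (γ B) T + γ (fadingSup b w t₀ t / w T) :=
          le_add_of_nonneg_left (hβ.nonneg (hγ.nonneg hB) hT)
  · have hDB : D (t - T) ≤ γ B := le_of_restart_of_norm_le hβ hγ hB
      (fun i s hs => (he i s hs).trans (hbB s)) hD0 hrestart hlate
    calc D t ≤ β (D (t - T)) (t - (t - T)) + γ (supNormIco e (t - T) t) :=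
          hrestart _ hlate t (by linarith)
      _ ≤ β (γ B) T + γ (fadingSup b w t₀ t / w T) := by
          rw [sub_sub_cancel]
          exact add_le_add (hβ.monotoneOn_left hT (hD _) (hγ.nonneg hB) hDB)
            (hsup _ hlate le_rfl)

end FadingMemory

lemma norm_pair_sub_le {E ι : Type*} [SeminormedAddCommGroup E] [Fintype ι] {F : ι → Type*}
    [∀ i, SeminormedAddCommGroup (F i)] (y s s' : E) (z z' : ∀ i, F i) (i : ι) :
    ‖(y, z i) - (s', z' i)‖ ≤ ‖(s', z') - (s, z)‖ + ‖y - s‖ := by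
  have hfst : ‖s' - s‖ ≤ ‖(s', z') - (s, z)‖ := norm_fst_le ((s', z') - (s, z))
  have hsnd : ‖z' i - z i‖ ≤ ‖(s', z') - (s, z)‖ :=
    (norm_le_pi_norm (z' - z) i).trans (norm_snd_le ((s', z') - (s, z)))
  rw [Prod.mk_sub_mk, Prod.norm_def]
  refine max_le ?_ ?_
  · calc ‖y - s'‖ ≤ ‖y - s‖ + ‖s - s'‖ := norm_sub_le_norm_sub_add_norm_sub _ _ _
      _ ≤ ‖(s', z') - (s, z)‖ + ‖y - s‖ := by rw [norm_sub_rev s]; linarith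
  · rw [norm_sub_rev]
    linarith [norm_nonneg (y - s)]

theorem stmt10_general {N m : ℕ} (nz : Fin N → ℕ)
    (F : (i : Fin N) → ℝ → (Fin m → ℝ) → (Fin (nz i) → ℝ) → (Fin m → ℝ))
    (Z : (i : Fin N) → ℝ → (Fin (nz i) → ℝ) → (Fin m → ℝ) → (Fin (nz i) → ℝ))
    (β : ℝ → ℝ → ℝ) (γhat : ℝ → ℝ) (hβ : ClassKL β) (hγ : ClassKinf γhat)
    (dG : ℝ) (hdG : 0 ≤ dG) (Ψ : ℝ → ℝ) (hΨ0 : ∀ t, 0 ≤ Ψ t)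
    (hΨbd : ∃ MΨ, ∀ t, Ψ t ≤ MΨ)
    -- δ-ISS of the perturbed blended dynamics, from any initial time:
    (hδISS : ∀ (t0' : ℝ) (σ σh : ℝ → Fin m → ℝ)
        (ζ ζh : (i : Fin N) → ℝ → Fin (nz i) → ℝ)
        (e eh : Fin N → ℝ → Fin m → ℝ),
        (∀ t ≥ t0', HasDerivAt σ ((N : ℝ)⁻¹ • ∑ i, F i t (σ t + e i t) (ζ i t)) t) →
        (∀ i, ∀ t ≥ t0', HasDerivAt (ζ i) (Z i t (ζ i t) (σ t + e i t)) t) →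
        (∀ t ≥ t0', HasDerivAt σh ((N : ℝ)⁻¹ • ∑ i, F i t (σh t + eh i t) (ζh i t)) t) →
        (∀ i, ∀ t ≥ t0', HasDerivAt (ζh i) (Z i t (ζh i t) (σh t + eh i t)) t) →
        ∀ t ≥ t0',
          ‖(σh t, fun i => ζh i t) - (σ t, fun i => ζ i t)‖ ≤
            β ‖(σh t0', fun i => ζh i t0') - (σ t0', fun i => ζ i t0')‖ (t - t0') +
            γhat (sSup {r | ∃ s ∈ Set.Ico t0' t, ∃ i, r = ‖eh i s - e i s‖}))
    (t0 : ℝ) (y : Fin N → ℝ → Fin m → ℝ) (z : (i : Fin N) → ℝ → Fin (nz i) → ℝ)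
    -- network trajectory: the coupling terms cancel in the average:
    (hs : ∀ t ≥ t0, HasDerivAt (fun τ => (N : ℝ)⁻¹ • ∑ i, y i τ)
        ((N : ℝ)⁻¹ • ∑ i, F i t (y i t) (z i t)) t)
    (hz : ∀ i, ∀ t ≥ t0, HasDerivAt (z i) (Z i t (z i t) (y i t)) t)
    -- funnel objective:
    (he : ∀ i, ∀ t ≥ t0, ‖y i t - (N : ℝ)⁻¹ • ∑ k, y k t‖ ≤ dG * Ψ t)
    -- solution of the (unperturbed) blended dynamics with matched initial condition:
    (sh : ℝ → Fin m → ℝ) (zh : (i : Fin N) → ℝ → Fin (nz i) → ℝ)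
    (hsh : ∀ t ≥ t0, HasDerivAt sh ((N : ℝ)⁻¹ • ∑ i, F i t (sh t) (zh i t)) t)
    (hzh : ∀ i, ∀ t ≥ t0, HasDerivAt (zh i) (Z i t (zh i t) (sh t)) t)
    (hsh0 : sh t0 = (N : ℝ)⁻¹ • ∑ i, y i t0)
    (hzh0 : ∀ i, zh i t0 = z i t0) :
    ∀ w : ℝ → ℝ,
      (∀ t ≥ (0 : ℝ), 0 < w t ∧ w t ≤ 1) → AntitoneOn w (Set.Ici 0) →
      Tendsto w atTop (nhds 0) →
      ∃ γ : ℝ → ℝ, ClassKinf γ ∧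
        ∀ i, ∀ t ≥ t0,
          ‖(y i t, z i t) - (sh t, zh i t)‖ ≤
            γ (sSup {r | ∃ s ∈ Set.Ico t0 t, r = dG * Ψ s * w (t - s)}) + dG * Ψ t := by
  intro w hw hwanti _
  obtain ⟨M, hM⟩ := hΨbd
  set s : ℝ → Fin m → ℝ := fun τ => (N : ℝ)⁻¹ • ∑ i, y i τ with hs_def
  set D : ℝ → ℝ := fun t => ‖(sh t, fun i => zh i t) - (s t, fun i => z i t)‖ with hD_def
  have hrestart : ∀ τ ≥ t0, ∀ t ≥ τ,
      D t ≤ β (D τ) (t - τ) + γhat (supNormIco (fun i t => y i t - s t) τ t) := by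
    intro τ hτ t ht
    have h := hδISS τ s sh z zh (fun i t => y i t - s t) (fun _ _ => 0)
      (fun t ht => by simpa only [add_sub_cancel] using hs t (hτ.trans ht))
      (fun i t ht => by simpa only [add_sub_cancel] using hz i t (hτ.trans ht))
      (fun t ht => by simpa only [add_zero] using hsh t (hτ.trans ht))
      (fun i t ht => by simpa only [add_zero] using hzh i t (hτ.trans ht)) t ht
    simp only [zero_sub, norm_neg] at h
    exact h
  have hD0 : D t0 = 0 := by simp only [hD_def, hsh0, hzh0, hs_def, sub_self, norm_zero]
  have hw0 : ∀ T ≥ 0, 0 < w T := fun T hT => (hw T hT).1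
  have hb : ∀ t, 0 ≤ dG * Ψ t := fun t => mul_nonneg hdG (hΨ0 t)
  have hbM : ∀ t, dG * Ψ t ≤ dG * M := fun t => mul_le_mul_of_nonneg_left (hM t) hdG
  obtain ⟨γ, hγK, hγle⟩ := exists_classKinf_ge_of_forall_le_KL_add hβ hγ hw0
    (hγ.nonneg ((hb t0).trans (hbM t0)))
  refine ⟨γ, hγK, fun i t ht => ?_⟩
  calc ‖(y i t, z i t) - (sh t, zh i t)‖ ≤ D t + ‖y i t - s t‖ :=
        norm_pair_sub_le (y i t) (s t) (sh t) (fun j => z j t) (fun j => zh j t) i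
    _ ≤ γ (fadingSup (fun t => dG * Ψ t) w t0 t) + dG * Ψ t :=
        add_le_add (hγle _ (fadingSup_nonneg hb hw0 t0 t) _ fun T hT =>
          le_KL_add_fadingSup_div_of_restart (D := D) hβ hγ hb hbM hw0
            (fun T hT => (hw T hT).2) hwanti he (fun _ => norm_nonneg _) hD0 hrestart hT ht)
          (he i t ht)

/-- Emergent behavior (Corollary 2): if the perturbed blended dynamics is δ-ISS with
`(β, γ̂)` and the funnel objective gives `‖e_i(t)‖ ≤ d_G Ψ(t)`, then for any decaying
weight `w` there is `γ ∈ 𝒦_∞` such that every agent's trajectory is close to the solution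
of the (unperturbed) blended dynamics started from the averaged initial condition:
`‖(y_i(t), z_i(t)) - (ŝ(t), ẑ_i(t))‖ ≤ γ(sup_{s∈[t_0,t)} d_G Ψ(s) w(t-s)) + d_G Ψ(t)`. -/
theorem stmt10 {N m : ℕ} (hN : 0 < N) (nz : Fin N → ℕ)
    (F : (i : Fin N) → ℝ → (Fin m → ℝ) → (Fin (nz i) → ℝ) → (Fin m → ℝ))
    (Z : (i : Fin N) → ℝ → (Fin (nz i) → ℝ) → (Fin m → ℝ) → (Fin (nz i) → ℝ))
    (β : ℝ → ℝ → ℝ) (γhat : ℝ → ℝ) (hβ : ClassKL β) (hγ : ClassKinf γhat)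
    (dG : ℝ) (hdG : 0 ≤ dG) (Ψ : ℝ → ℝ) (hΨ0 : ∀ t, 0 ≤ Ψ t)
    (hΨbd : ∃ MΨ, ∀ t, Ψ t ≤ MΨ)
    -- δ-ISS of the perturbed blended dynamics, from any initial time:
    (hδISS : ∀ (t0' : ℝ) (σ σh : ℝ → Fin m → ℝ)
        (ζ ζh : (i : Fin N) → ℝ → Fin (nz i) → ℝ)
        (e eh : Fin N → ℝ → Fin m → ℝ),
        (∀ t ≥ t0', HasDerivAt σ ((N : ℝ)⁻¹ • ∑ i, F i t (σ t + e i t) (ζ i t)) t) →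
        (∀ i, ∀ t ≥ t0', HasDerivAt (ζ i) (Z i t (ζ i t) (σ t + e i t)) t) →
        (∀ t ≥ t0', HasDerivAt σh ((N : ℝ)⁻¹ • ∑ i, F i t (σh t + eh i t) (ζh i t)) t) →
        (∀ i, ∀ t ≥ t0', HasDerivAt (ζh i) (Z i t (ζh i t) (σh t + eh i t)) t) →
        ∀ t ≥ t0',
          ‖(σh t, fun i => ζh i t) - (σ t, fun i => ζ i t)‖ ≤
            β ‖(σh t0', fun i => ζh i t0') - (σ t0', fun i => ζ i t0')‖ (t - t0') +
            γhat (sSup {r | ∃ s ∈ Set.Ico t0' t, ∃ i, r = ‖eh i s - e i s‖}))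
    (t0 : ℝ) (y : Fin N → ℝ → Fin m → ℝ) (z : (i : Fin N) → ℝ → Fin (nz i) → ℝ)
    -- network trajectory: the coupling terms cancel in the average:
    (hs : ∀ t ≥ t0, HasDerivAt (fun τ => (N : ℝ)⁻¹ • ∑ i, y i τ)
        ((N : ℝ)⁻¹ • ∑ i, F i t (y i t) (z i t)) t)
    (hz : ∀ i, ∀ t ≥ t0, HasDerivAt (z i) (Z i t (z i t) (y i t)) t)
    -- funnel objective:
    (he : ∀ i, ∀ t ≥ t0, ‖y i t - (N : ℝ)⁻¹ • ∑ k, y k t‖ ≤ dG * Ψ t)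
    -- solution of the (unperturbed) blended dynamics with matched initial condition:
    (sh : ℝ → Fin m → ℝ) (zh : (i : Fin N) → ℝ → Fin (nz i) → ℝ)
    (hsh : ∀ t ≥ t0, HasDerivAt sh ((N : ℝ)⁻¹ • ∑ i, F i t (sh t) (zh i t)) t)
    (hzh : ∀ i, ∀ t ≥ t0, HasDerivAt (zh i) (Z i t (zh i t) (sh t)) t)
    (hsh0 : sh t0 = (N : ℝ)⁻¹ • ∑ i, y i t0)
    (hzh0 : ∀ i, zh i t0 = z i t0) :
    ∀ w : ℝ → ℝ,
      (∀ t ≥ (0 : ℝ), 0 < w t ∧ w t ≤ 1) → AntitoneOn w (Set.Ici 0) →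
      Tendsto w atTop (nhds 0) →
      ∃ γ : ℝ → ℝ, ClassKinf γ ∧
        ∀ i, ∀ t ≥ t0,
          ‖(y i t, z i t) - (sh t, zh i t)‖ ≤
            γ (sSup {r | ∃ s ∈ Set.Ico t0 t, r = dG * Ψ s * w (t - s)}) + dG * Ψ t :=
  stmt10_general nz F Z β γhat hβ hγ dG hdG Ψ hΨ0 hΨbd hδISS t0 y z hs hz he sh zh hsh hzh hsh0 hzh0
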